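/- arXiv:1803.03170 — 4 statements merged into one kernel-verified Lean document; each statement's English description precedes it below -/
import Mathlib

section
/- Let $\nu > 0$ and $\mu > -1$. Then for all $t \in \mathbb{N}_a$, $\nabla_a^{-\nu}\big((t-a)^{\overline{\mu}}\big) = \frac{\Gamma(\mu+1)}{\Gamma(\mu+\nu+1)}(t-a)^{\overline{\mu+\nu}}$ (the fractional power rule for nabla sums). -/
open Filter Finset

/-- Generalized rising function `x^{\overline r} = Γ(x+r)/Γ(x)` (with the usual
vanishing convention, since `Real.Gamma` vanishes at nonpositive integers and
division by zero is zero in Lean). -/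
noncomputable def rfac (x r : ℝ) : ℝ := Real.Gamma (x + r) / Real.Gamma x

/-- Backward (nabla) difference. -/
def nbl (f : ℤ → ℝ) (t : ℤ) : ℝ := f t - f (t - 1)

/-- The `ν`-th order nabla fractional sum based at `a`. -/
noncomputable def nsum (ν : ℝ) (a : ℤ) (f : ℤ → ℝ) (t : ℤ) : ℝ :=
  (1 / Real.Gamma ν) * ∑ s ∈ Finset.Icc (a + 1) t, rfac ((t : ℝ) - (s : ℝ) + 1) (ν - 1) * f s

/-- The `ν`-th order nabla fractional difference based at `a`, for `0 < ν < 1`. -/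
noncomputable def ndiff (ν : ℝ) (a : ℤ) (f : ℤ → ℝ) (t : ℤ) : ℝ :=
  nbl (nsum (1 - ν) a f) t

/-!
Write `t = a + m + 1`. The kernel `(t - s + 1)^{\overline{ν-1}} / Γ(ν)` is the multiset
coefficient `multichoose ν (t - s)`, and `(s - a)^{\overline{μ}}` equals
`Γ(μ + 1) · multichoose (μ + 1) (s - a - 1)`, so the fractional sum is `Γ(μ + 1)` times the
convolution `∑_{i+j=m} multichoose ν i · multichoose (μ + 1) j`. By Vandermonde's identity for
`multichoose` (Chu–Vandermonde for `choose`, via `choose (-r) k = (-1)^k multichoose r k`) this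
is `multichoose (μ + ν + 1) m`, and `Γ(μ + ν + 1) · multichoose (μ + ν + 1) m` is
`(t - a)^{\overline{μ+ν}}`.
-/

theorem Ring.multichoose_add {R : Type*} [CommRing R] [BinomialRing R] (r s : R) (n : ℕ) :
    Ring.multichoose (r + s) n =
      ∑ ij ∈ antidiagonal n, Ring.multichoose r ij.1 * Ring.multichoose s ij.2 := by
  have h := Ring.add_choose_eq n (Commute.all (-r) (-s))
  rw [← neg_add, Ring.choose_neg'] at h
  simp only [Ring.choose_neg', Units.smul_def, smul_mul_smul_comm] at h
  have hsign : ∀ ij ∈ antidiagonal n,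
      ((ij.1 : ℤ).negOnePow * (ij.2 : ℤ).negOnePow : ℤ) = (n : ℤ).negOnePow := by
    intro ij hij
    rw [← Units.val_mul, ← Int.negOnePow_add, ← Nat.cast_add,
      HasAntidiagonal.mem_antidiagonal.1 hij]
  rw [sum_congr rfl fun ij hij => by rw [hsign ij hij], ← smul_sum, ← Units.smul_def,
    ← Units.smul_def] at h
  exact smul_left_cancel_iff _ |>.1 h

theorem Real.Gamma_add_nat_eq_ascPochhammer_mul {x : ℝ} (hx : ∀ m : ℕ, x ≠ -m) (n : ℕ) :
    Real.Gamma (x + n) = (ascPochhammer ℝ n).eval x * Real.Gamma x := by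
  induction n with
  | zero => simp
  | succ n ih =>
    have hxn : x + n ≠ 0 := fun h => hx n (by linarith)
    rw [Nat.cast_succ, ← add_assoc, Real.Gamma_add_one hxn, ih, ascPochhammer_succ_eval]
    ring

theorem Ring.multichoose_eq_ascPochhammer_div {K : Type*} [Field K] [CharZero K] (x : K) (n : ℕ) :
    Ring.multichoose x n = (ascPochhammer K n).eval x / n.factorial := by
  rw [eq_div_iff (Nat.cast_ne_zero.2 n.factorial_ne_zero), mul_comm, ← nsmul_eq_mul,
    Ring.factorial_nsmul_multichoose_eq_ascPochhammer, Polynomial.ascPochhammer_smeval_eq_eval]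

theorem rfac_natCast_add_one {r : ℝ} (hr : ∀ m : ℕ, r + 1 ≠ -m) (k : ℕ) :
    rfac ((k : ℝ) + 1) r = Real.Gamma (r + 1) * Ring.multichoose (r + 1) k := by
  rw [rfac, show (k : ℝ) + 1 + r = r + 1 + k by ring,
    Real.Gamma_add_nat_eq_ascPochhammer_mul hr, Real.Gamma_nat_eq_factorial,
    Ring.multichoose_eq_ascPochhammer_div]
  ring

theorem Finset.sum_Icc_int_eq_sum_antidiagonal {M : Type*} [AddCommMonoid M] (a : ℤ) (n : ℕ)
    (f : ℤ → M) :
    ∑ s ∈ Icc (a + 1) (a + (n + 1 : ℕ)), f s =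
      ∑ ij ∈ antidiagonal n, f (a + 1 + ij.2) := by
  refine sum_nbij' (fun s => ((a + n + 1 - s).toNat, (s - a - 1).toNat))
    (fun ij => a + 1 + ij.2) ?_ ?_ ?_ ?_ fun s _ => congrArg f ?_ <;>
    simp only [mem_Icc, HasAntidiagonal.mem_antidiagonal, Prod.forall, Prod.ext_iff] at * <;>
    intros <;> omega

theorem nsum_add_nat_succ (ν : ℝ) (a : ℤ) (f : ℤ → ℝ) (n : ℕ) :
    nsum ν a f (a + (n + 1 : ℕ)) =
      1 / Real.Gamma ν *
        ∑ ij ∈ antidiagonal n, rfac ((ij.1 : ℝ) + 1) (ν - 1) * f (a + 1 + ij.2) := by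
  rw [nsum, sum_Icc_int_eq_sum_antidiagonal]
  refine congrArg _ (sum_congr rfl fun ij hij => ?_)
  rw [← HasAntidiagonal.mem_antidiagonal.1 hij]
  push_cast
  ring_nf

theorem stmt2 (ν μ : ℝ) (hν : 0 < ν) (hμ : -1 < μ) (a t : ℤ) (ht : a ≤ t) :
    nsum ν a (fun s => rfac ((s : ℝ) - (a : ℝ)) μ) t
      = Real.Gamma (μ + 1) / Real.Gamma (μ + ν + 1) * rfac ((t : ℝ) - (a : ℝ)) (μ + ν) := by
  obtain ⟨n, rfl⟩ : ∃ n : ℕ, t = a + n := ⟨(t - a).toNat, by omega⟩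
  rcases n with _ | m
  · -- empty sum on the left; on the right `rfac 0 _` divides by `Γ 0 = 0`
    simp [nsum, rfac]
  have not_pole : ∀ x : ℝ, 0 < x → ∀ k : ℕ, x ≠ -k := fun x hx k h => by
    linarith [k.cast_nonneg (α := ℝ)]
  have hΓν : Real.Gamma ν ≠ 0 := (Real.Gamma_pos_of_pos hν).ne'
  have hΓμν : Real.Gamma (μ + ν + 1) ≠ 0 := (Real.Gamma_pos_of_pos (by linarith)).ne'
  have shift : ∀ j : ℕ, ((a + 1 + j : ℤ) : ℝ) - a = j + 1 := fun j => by push_cast; ring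
  have length : ((a + (m + 1 : ℕ) : ℤ) : ℝ) - a = m + 1 := by push_cast; ring
  simp only [nsum_add_nat_succ, shift, length,
    rfac_natCast_add_one (not_pole _ (by linarith : 0 < ν - 1 + 1)),
    rfac_natCast_add_one (not_pole _ (by linarith : 0 < μ + 1)),
    rfac_natCast_add_one (not_pole _ (by linarith : 0 < μ + ν + 1)), sub_add_cancel]
  calc 1 / Real.Gamma ν * ∑ ij ∈ antidiagonal m,
        Real.Gamma ν * Ring.multichoose ν ij.1 *
          (Real.Gamma (μ + 1) * Ring.multichoose (μ + 1) ij.2)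
      = Real.Gamma (μ + 1) * ∑ ij ∈ antidiagonal m,
        Ring.multichoose ν ij.1 * Ring.multichoose (μ + 1) ij.2 := by
        rw [mul_sum, mul_sum]
        exact sum_congr rfl fun _ _ => by field_simp
    _ = Real.Gamma (μ + 1) / Real.Gamma (μ + ν + 1) *
        (Real.Gamma (μ + ν + 1) * Ring.multichoose (μ + ν + 1) m) := by
        rw [← Ring.multichoose_add, show ν + (μ + 1) = μ + ν + 1 by ring]
        field_simp
end

section
/- Let $0 < \nu < 1$ and $a \in \mathbb{Z}$. Then for all $t \in \mathbb{N}_{a+1}$, $\nabla_{a-1}^{\nu}\left(\frac{(t-(a-1))^{\overline{\nu-1}}}{\Gamma(\nu)}\right) = 0$; i.e., the function $h(t) = (t-a+1)^{\overline{\nu-1}}/\Gamma(\nu)$ is annihilated by the $\nu$-th order nabla fractional difference based at $a-1$. -/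
open Filter Finset

theorem Real.Gamma_add_nat_eq_mul_ascPochhammer {x : ℝ} (hx : 0 < x) (n : ℕ) :
    Real.Gamma (x + n) = Real.Gamma x * (ascPochhammer ℝ n).eval x := by
  induction n with
  | zero => simp
  | succ n ih =>
    rw [Nat.cast_succ, ← add_assoc, Real.Gamma_add_one (by positivity), ih,
      ascPochhammer_succ_eval]
    ring

theorem Real.Gamma_add_nat_eq_mul_multichoose {x : ℝ} (hx : 0 < x) (n : ℕ) :
    Real.Gamma (x + n) = n.factorial * Real.Gamma x * Ring.multichoose x n := by
  rw [Real.Gamma_add_nat_eq_mul_ascPochhammer hx, ← Polynomial.ascPochhammer_smeval_eq_eval,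
    ← Ring.factorial_nsmul_multichoose_eq_ascPochhammer, nsmul_eq_mul]
  ring

theorem rfac_nat_add_one {x : ℝ} (hx : 0 < x) (n : ℕ) :
    rfac (n + 1) (x - 1) = Real.Gamma x * Ring.multichoose x n := by
  have hfac : (n.factorial : ℝ) ≠ 0 := by positivity
  rw [rfac, show (n : ℝ) + 1 + (x - 1) = x + n by ring, Real.Gamma_nat_eq_factorial,
    Real.Gamma_add_nat_eq_mul_multichoose hx]
  field_simp

theorem Int.sum_Icc_add_nat_eq_sum_antidiagonal {M : Type*} [AddCommMonoid M] (f : ℤ → M)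
    (a : ℤ) (n : ℕ) : ∑ s ∈ Icc a (a + n), f s = ∑ ij ∈ antidiagonal n, f (a + ij.1) := by
  symm
  apply sum_nbij' (fun ij : ℕ × ℕ => a + (ij.1 : ℤ)) (fun s => ((s - a).toNat, n - (s - a).toNat))
  all_goals
    intro _ h
    simp only [mem_Icc, HasAntidiagonal.mem_antidiagonal] at h
  · simp only [mem_Icc]; omega
  · simp only [HasAntidiagonal.mem_antidiagonal]; omega
  · ext <;> simp only <;> omega
  · omega
  · rfl

theorem nsum_rfac {μ ν : ℝ} (hμ : 0 < μ) (hν : 0 < ν) (a t : ℤ) (ht : a ≤ t) :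
    nsum μ (a - 1) (fun s => rfac ((s : ℝ) - a + 1) (ν - 1) / Real.Gamma ν) t
      = rfac ((t : ℝ) - a + 1) (μ + ν - 1) / Real.Gamma (μ + ν) := by
  obtain ⟨n, rfl⟩ := Int.le.dest ht
  have hΓμ := (Real.Gamma_pos_of_pos hμ).ne'
  have hΓν := (Real.Gamma_pos_of_pos hν).ne'
  have hΓμν := (Real.Gamma_pos_of_pos (add_pos hμ hν)).ne'
  have hterm : ∀ ij ∈ antidiagonal n,
      rfac (((a + n : ℤ) : ℝ) - ((a + ij.1 : ℤ) : ℝ) + 1) (μ - 1) *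
        (rfac (((a + ij.1 : ℤ) : ℝ) - a + 1) (ν - 1) / Real.Gamma ν)
      = Real.Gamma μ * (Ring.multichoose ν ij.1 * Ring.multichoose μ ij.2) := by
    intro ij hij
    have hn : (n : ℝ) = ij.1 + ij.2 := by exact_mod_cast (mem_antidiagonal.mp hij).symm
    push_cast
    rw [show (a : ℝ) + n - (a + ij.1) + 1 = ij.2 + 1 by rw [hn]; ring,
      show (a : ℝ) + ij.1 - a + 1 = ij.1 + 1 by ring, rfac_nat_add_one hμ, rfac_nat_add_one hν]
    field_simp
  rw [nsum, sub_add_cancel, Int.sum_Icc_add_nat_eq_sum_antidiagonal, sum_congr rfl hterm,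
    ← mul_sum, ← Ring.multichoose_add, show ((a + n : ℤ) : ℝ) - a + 1 = n + 1 by push_cast; ring,
    show μ + ν - 1 = ν + μ - 1 by ring, add_comm μ ν, rfac_nat_add_one (add_pos hν hμ)]
  field_simp

theorem nsum_one_sub_rfac_eq_one {ν : ℝ} (h1 : 0 < ν) (h2 : ν < 1) (a t : ℤ) (ht : a ≤ t) :
    nsum (1 - ν) (a - 1) (fun s => rfac ((s : ℝ) - a + 1) (ν - 1) / Real.Gamma ν) t = 1 := by
  have hpos : (0 : ℝ) < t - a + 1 := by
    have : (a : ℝ) ≤ t := Int.cast_le.2 ht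
    linarith
  rw [nsum_rfac (sub_pos.2 h2) h1 a t ht, sub_add_cancel, sub_self, Real.Gamma_one, div_one, rfac,
    add_zero, div_self (Real.Gamma_pos_of_pos hpos).ne']

theorem stmt7 (ν : ℝ) (h1 : 0 < ν) (h2 : ν < 1) (a : ℤ) (t : ℤ) (ht : a + 1 ≤ t) :
    ndiff ν (a - 1) (fun s => rfac ((s : ℝ) - (a : ℝ) + 1) (ν - 1) / Real.Gamma ν) t = 0 := by
  rw [ndiff, nbl, nsum_one_sub_rfac_eq_one h1 h2 a t (by omega),
    nsum_one_sub_rfac_eq_one h1 h2 a (t - 1) (by omega), sub_self]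
end

section
/- Let $0<\nu<1$, $a \in \mathbb{Z}$, $p : \mathbb{N}_a \to (0,\infty)$, and $F : \mathbb{N}_{a+1} \times \mathbb{R} \to [0,\infty)$. If $y : \mathbb{N}_{a-1} \to \mathbb{R}$ satisfies $p(t)\nabla y(t) = -\nabla_a^{-\nu} F(t, y(t-1))$ for all $t \in \mathbb{N}_a$, then $\nabla_{a-1}^{\nu}(p\nabla y)(t) + F(t, y(t-1)) = 0$ for all $t \in \mathbb{N}_{a+1}$. -/
open Filter Finset

/-! Because `(1 - ν) + ν = 1`, the composition rule `∇_a^{-μ} ∇_a^{-ν} = ∇_a^{-(μ+ν)}` turns the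
`(1 - ν)`-th sum of `p ∇y = -∇_a^{-ν} F` into the plain sum `-∑_{s=a+1}^{t} F`, whose backward
difference is `-F(t)`; the base point `a - 1` is harmless since `∇_a^{-ν} F` vanishes at `a`.
The composition rule comes down to the Vandermonde-type convolution
`∑_{i+j=n} Γ(i+ν)/i! · Γ(j+μ)/j! = Γ(μ)Γ(ν)/Γ(μ+ν) · Γ(n+μ+ν)/n!`, both sides of which satisfy
the recurrence `(n+1) S_{n+1} = (n+μ+ν) S_n`. -/

theorem rfac_add_one_mul {x r : ℝ} (hx : x ≠ 0) (hxr : x + r ≠ 0) :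
    x * rfac (x + 1) r = (x + r) * rfac x r := by
  unfold rfac
  rw [add_right_comm, Real.Gamma_add_one hxr, Real.Gamma_add_one hx]
  by_cases hΓ : Real.Gamma x = 0
  · simp [hΓ]
  · field_simp

theorem rfac_zero_of_pos {x : ℝ} (hx : 0 < x) : rfac x 0 = 1 := by
  simp [rfac, (Real.Gamma_pos_of_pos hx).ne']

theorem rfac_one_sub_one (ν : ℝ) : rfac 1 (ν - 1) = Real.Gamma ν := by
  simp [rfac]

theorem natCast_add_one_mul_rfac_succ {ν : ℝ} (hν : 0 < ν) (j : ℕ) :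
    ((j : ℝ) + 1) * rfac ((↑(j + 1) : ℝ) + 1) (ν - 1) = (j + ν) * rfac ((j : ℝ) + 1) (ν - 1) := by
  have h := rfac_add_one_mul (x := (j : ℝ) + 1) (r := ν - 1) (by positivity)
    (by rw [add_add_sub_cancel]; positivity)
  rw [add_add_sub_cancel] at h
  push_cast
  exact h

theorem add_one_mul_sum_antidiagonal_succ {A B : ℕ → ℝ} {α β : ℝ}
    (hA : ∀ j : ℕ, ((j : ℝ) + 1) * A (j + 1) = (j + α) * A j)
    (hB : ∀ k : ℕ, ((k : ℝ) + 1) * B (k + 1) = (k + β) * B k) (n : ℕ) :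
    ((n : ℝ) + 1) * ∑ p ∈ antidiagonal (n + 1), A p.1 * B p.2
      = (n + α + β) * ∑ p ∈ antidiagonal n, A p.1 * B p.2 := by
  have split : ((n : ℝ) + 1) * ∑ p ∈ antidiagonal (n + 1), A p.1 * B p.2
      = ∑ p ∈ antidiagonal (n + 1), (p.1 : ℝ) * A p.1 * B p.2
        + ∑ p ∈ antidiagonal (n + 1), A p.1 * ((p.2 : ℝ) * B p.2) := by
    rw [mul_sum, ← sum_add_distrib]
    refine sum_congr rfl fun p hp => ?_
    have hn : ((p.1 : ℝ) + p.2) = n + 1 := by exact_mod_cast mem_antidiagonal.mp hp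
    linear_combination (A p.1 * B p.2) * hn.symm
  rw [split, Nat.sum_antidiagonal_succ, Nat.sum_antidiagonal_succ', mul_sum]
  simp only [Nat.cast_zero, zero_mul, mul_zero, zero_add, Nat.cast_add_one]
  rw [← sum_add_distrib]
  refine sum_congr rfl fun p hp => ?_
  have hn : ((p.1 : ℝ) + p.2) = n := by exact_mod_cast mem_antidiagonal.mp hp
  rw [hA, hB, ← hn]
  ring

theorem sum_antidiagonal_rfac_mul_rfac {μ ν : ℝ} (hμ : 0 < μ) (hν : 0 < ν) (n : ℕ) :
    ∑ p ∈ antidiagonal n, rfac ((p.1 : ℝ) + 1) (ν - 1) * rfac ((p.2 : ℝ) + 1) (μ - 1)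
      = Real.Gamma μ * Real.Gamma ν / Real.Gamma (μ + ν) * rfac ((n : ℝ) + 1) (μ + ν - 1) := by
  induction n with
  | zero =>
    simp only [Nat.antidiagonal_zero, sum_singleton, Nat.cast_zero, zero_add, rfac_one_sub_one]
    field_simp [(Real.Gamma_pos_of_pos (add_pos hμ hν)).ne']
  | succ n ih =>
    have h := add_one_mul_sum_antidiagonal_succ (A := fun j : ℕ => rfac ((j : ℝ) + 1) (ν - 1))
      (B := fun k : ℕ => rfac ((k : ℝ) + 1) (μ - 1)) (natCast_add_one_mul_rfac_succ hν)
      (natCast_add_one_mul_rfac_succ hμ) n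
    refine mul_left_cancel₀ (by positivity : (n : ℝ) + 1 ≠ 0) ?_
    rw [h, ih, mul_left_comm ((n : ℝ) + 1), natCast_add_one_mul_rfac_succ (add_pos hμ hν)]
    ring

theorem sum_Icc_rfac_mul_rfac {μ ν : ℝ} (hμ : 0 < μ) (hν : 0 < ν) {r t : ℤ} (hrt : r ≤ t) :
    ∑ s ∈ Icc r t, rfac ((t : ℝ) - s + 1) (μ - 1) * rfac ((s : ℝ) - r + 1) (ν - 1)
      = Real.Gamma μ * Real.Gamma ν / Real.Gamma (μ + ν) * rfac ((t : ℝ) - r + 1) (μ + ν - 1) := by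
  obtain ⟨n, rfl⟩ : ∃ n : ℕ, t = r + n := ⟨(t - r).toNat, by omega⟩
  push_cast
  rw [add_sub_cancel_left, ← sum_antidiagonal_rfac_mul_rfac hμ hν n]
  symm
  refine sum_nbij' (fun p => r + p.1) (fun s => ((s - r).toNat, (r + n - s).toNat))
    ?_ ?_ ?_ ?_ ?_
  · intro p hp
    simp only [HasAntidiagonal.mem_antidiagonal, mem_Icc] at hp ⊢
    omega
  · intro s hs
    simp only [HasAntidiagonal.mem_antidiagonal, mem_Icc] at hs ⊢
    omega
  · intro p hp
    simp only [HasAntidiagonal.mem_antidiagonal] at hp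
    ext <;> simp only <;> omega
  · intro s hs
    simp only [mem_Icc] at hs
    simp only
    omega
  · intro p hp
    have hn : (p.1 : ℝ) + p.2 = n := by exact_mod_cast HasAntidiagonal.mem_antidiagonal.mp hp
    push_cast
    rw [mul_comm]
    congr 2 <;> linarith

theorem nsum_congr {μ : ℝ} {a t : ℤ} {f g : ℤ → ℝ} (h : ∀ s ∈ Icc (a + 1) t, f s = g s) :
    nsum μ a f t = nsum μ a g t := by
  unfold nsum
  rw [sum_congr rfl fun s hs => by rw [h s hs]]

theorem nsum_neg (μ : ℝ) (a : ℤ) (f : ℤ → ℝ) (t : ℤ) : nsum μ a (-f) t = -nsum μ a f t := by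
  simp only [nsum, Pi.neg_apply, mul_neg, sum_neg_distrib]

theorem nsum_self (μ : ℝ) (a : ℤ) (f : ℤ → ℝ) : nsum μ a f a = 0 := by
  simp [nsum]

theorem nsum_sub_one_of_eq_zero {μ : ℝ} {a : ℤ} {f : ℤ → ℝ} (hf : f a = 0) (t : ℤ) :
    nsum μ (a - 1) f t = nsum μ a f t := by
  unfold nsum
  rw [sub_add_cancel]
  congr 1
  refine (sum_subset (Icc_subset_Icc_left (by omega)) fun s hs hs' => ?_).symm
  obtain rfl : s = a := by
    simp only [mem_Icc] at hs hs'
    omega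
  rw [hf, mul_zero]

theorem nsum_one (a : ℤ) (f : ℤ → ℝ) (t : ℤ) : nsum 1 a f t = ∑ s ∈ Icc (a + 1) t, f s := by
  unfold nsum
  rw [Real.Gamma_one, div_one, one_mul, sub_self]
  refine sum_congr rfl fun s hs => ?_
  have hst : (s : ℝ) ≤ t := by exact_mod_cast (mem_Icc.mp hs).2
  rw [rfac_zero_of_pos (by linarith), one_mul]

theorem nsum_nsum {μ ν : ℝ} (hμ : 0 < μ) (hν : 0 < ν) (a : ℤ) (f : ℤ → ℝ) (t : ℤ) :
    nsum μ a (nsum ν a f) t = nsum (μ + ν) a f t := by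
  have hΓ : ∀ x : ℝ, 0 < x → Real.Gamma x ≠ 0 := fun x hx => (Real.Gamma_pos_of_pos hx).ne'
  have swap : ∑ s ∈ Icc (a + 1) t, rfac ((t : ℝ) - s + 1) (μ - 1) *
        ∑ r ∈ Icc (a + 1) s, rfac ((s : ℝ) - r + 1) (ν - 1) * f r
      = ∑ r ∈ Icc (a + 1) t, (∑ s ∈ Icc r t,
          rfac ((t : ℝ) - s + 1) (μ - 1) * rfac ((s : ℝ) - r + 1) (ν - 1)) * f r := by
    simp only [mul_sum, sum_mul, mul_assoc]
    exact sum_comm' fun s r => by simp only [mem_Icc]; omega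
  unfold nsum
  simp only [mul_left_comm _ (1 / Real.Gamma ν), ← mul_sum]
  rw [swap, sum_congr rfl fun r hr => by rw [sum_Icc_rfac_mul_rfac hμ hν (mem_Icc.mp hr).2,
    mul_assoc], ← mul_sum]
  field_simp [hΓ μ hμ, hΓ ν hν]

theorem ndiff_congr {ν : ℝ} {a t : ℤ} {f g : ℤ → ℝ} (h : ∀ s ∈ Icc (a + 1) t, f s = g s) :
    ndiff ν a f t = ndiff ν a g t := by
  unfold ndiff nbl
  rw [nsum_congr h, nsum_congr fun s hs => h s (Icc_subset_Icc_right (by omega) hs)]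

theorem ndiff_neg (ν : ℝ) (a : ℤ) (f : ℤ → ℝ) (t : ℤ) : ndiff ν a (-f) t = -ndiff ν a f t := by
  simp only [ndiff, nbl, nsum_neg]
  ring

theorem ndiff_sub_one_nsum {ν : ℝ} (h0 : 0 < ν) (h1 : ν < 1) {a t : ℤ} (ht : a + 1 ≤ t)
    (f : ℤ → ℝ) : ndiff ν (a - 1) (nsum ν a f) t = f t := by
  unfold ndiff nbl
  simp only [nsum_sub_one_of_eq_zero (nsum_self ν a f), nsum_nsum (sub_pos.2 h1) h0,
    sub_add_cancel, nsum_one]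
  rw [← insert_Icc_sub_one_right_eq_Icc ht, sum_insert (by simp), add_sub_cancel_right]

theorem stmt9_general (ν : ℝ) (h1 : 0 < ν) (h2 : ν < 1) (a : ℤ) (p : ℤ → ℝ) (F : ℤ → ℝ → ℝ)
    (y : ℤ → ℝ)
    (h : ∀ t, a ≤ t → p t * nbl y t = -(nsum ν a (fun s => F s (y (s - 1))) t)) :
    ∀ t, a + 1 ≤ t →
      ndiff ν (a - 1) (fun s => p s * nbl y s) t + F t (y (t - 1)) = 0 := by
  intro t ht
  have hpy : ndiff ν (a - 1) (fun s => p s * nbl y s) t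
      = ndiff ν (a - 1) (-nsum ν a fun s => F s (y (s - 1))) t :=
    ndiff_congr fun s hs => h s (by linarith [(mem_Icc.mp hs).1])
  rw [hpy, ndiff_neg, ndiff_sub_one_nsum h1 h2 ht, neg_add_cancel]

theorem stmt9 (ν : ℝ) (h1 : 0 < ν) (h2 : ν < 1) (a : ℤ) (p : ℤ → ℝ) (F : ℤ → ℝ → ℝ)
    (hp : ∀ t, a ≤ t → 0 < p t)
    (hF : ∀ t, a + 1 ≤ t → ∀ u : ℝ, 0 ≤ F t u)
    (y : ℤ → ℝ)
    (h : ∀ t, a ≤ t → p t * nbl y t = -(nsum ν a (fun s => F s (y (s - 1))) t)) :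
    ∀ t, a + 1 ≤ t →
      ndiff ν (a - 1) (fun s => p s * nbl y s) t + F t (y (t - 1)) = 0 :=
  stmt9_general ν h1 h2 a p F y h
end

section
/- Let $0<\nu<1$, $a\in\mathbb{Z}$, $p:\mathbb{N}_a\to(0,\infty)$, and $K>0$. Suppose $F:\mathbb{N}_{a+1}\times[0,\infty)\to[0,\infty)$ satisfies $|F(t,u)-F(t,v)|\le K|u-v|$. Define the operator $T$ on $\zeta_M := \{y:\mathbb{N}_{a-1}\to[M,\infty): \nabla y\le 0 \text{ on } \mathbb{N}_a,\ \nabla y(a)=0\}$ by $(Ty)(t) := M + \sum_{s=t+1}^{\infty}\frac{1}{p(s)}\sum_{\tau=a+1}^{s}\frac{(s-\tau+1)^{\overline{\nu-1}}}{\Gamma(\nu)}F(\tau,y(\tau-1))$, assuming the series converges for every $y\in\zeta_M$. Then $T$ maps $\zeta_M$ into $\zeta_M$, and for all $x,y\in\zeta_M$, $\sup_t|(Tx)(t)-(Ty)(t)| \le \frac{K}{\Gamma(\nu+1)}\Big(\sum_{s=a+1}^{\infty}\frac{(s-a)^{\overline{\nu}}}{p(s)}\Big)\sup_t|x(t)-y(t)|$.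 -/
/-!
Every summand of `T y` is nonnegative because `F ≥ 0` and the kernel `(s-τ+1)^{\overline{ν-1}}` is
positive, so `T y ≥ M`; moreover `T y (t-1) - T y t` is the summand with index `s = t`, which is
nonnegative and vanishes at `t = a` because its inner sum is then empty. For the estimate, the
Lipschitz bound reduces the inner sum to the kernel sum, which telescopes by the nabla power rule
`∇ (s-a)^{\overline ν}/Γ(ν+1) = (s-a)^{\overline{ν-1}}/Γ(ν)` to `(s-a)^{\overline ν}/Γ(ν+1)`; the
resulting series over `s > t` is a tail of the one over `s > a`.
-/

open Filter Finset

/-- The set `ζ_M` of functions on `ℕ_{a-1}` with values in `[M,∞)`, nonincreasing on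
`ℕ_a`, and with `∇y(a) = 0`, as a predicate on functions `ℤ → ℝ`. -/
def zetaM (a : ℤ) (M : ℝ) (y : ℤ → ℝ) : Prop :=
  (∀ t, a - 1 ≤ t → M ≤ y t) ∧ (∀ t, a ≤ t → nbl y t ≤ 0) ∧ nbl y a = 0

/-- The operator `(Ty)(t) = M + ∑_{s=t+1}^∞ (1/p(s)) ∑_{τ=a+1}^{s}
((s-τ+1)^{ν-1̄}/Γ(ν)) F(τ, y(τ-1))`. -/
noncomputable def Tmap (ν : ℝ) (a : ℤ) (p : ℤ → ℝ) (F : ℤ → ℝ → ℝ) (M : ℝ)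
    (y : ℤ → ℝ) (t : ℤ) : ℝ :=
  M + ∑' k : ℕ, (1 / p (t + 1 + k)) * ∑ τ ∈ Finset.Icc (a + 1) (t + 1 + (k : ℤ)),
    rfac ((t : ℝ) + 1 + (k : ℝ) - (τ : ℝ) + 1) (ν - 1) / Real.Gamma ν * F τ (y (τ - 1))

lemma rfac_zero_left (r : ℝ) : rfac 0 r = 0 := by simp [rfac]

lemma rfac_nonneg {x r : ℝ} (hx : 0 ≤ x) (hxr : 0 ≤ x + r) : 0 ≤ rfac x r :=
  div_nonneg (Real.Gamma_nonneg_of_nonneg hxr) (Real.Gamma_nonneg_of_nonneg hx)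

lemma rfac_add_one_div_Gamma {x ν : ℝ} (hx : 0 ≤ x) (hν : 0 < ν) :
    rfac (x + 1) ν / Real.Gamma (ν + 1)
      = rfac x ν / Real.Gamma (ν + 1) + rfac (x + 1) (ν - 1) / Real.Gamma ν := by
  have hΓν := (Real.Gamma_pos_of_pos hν).ne'
  rcases hx.eq_or_lt with rfl | hx
  · simp only [rfac, zero_add, Real.Gamma_zero, div_zero, Real.Gamma_one, div_one,
      add_sub_cancel, zero_div, zero_add, add_comm 1 ν]
    rw [div_self (Real.Gamma_pos_of_pos (by linarith)).ne', div_self hΓν]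
  · have hxν : x + ν ≠ 0 := by linarith
    simp only [rfac]
    rw [show x + 1 + (ν - 1) = x + ν by ring, show x + 1 + ν = x + ν + 1 by ring,
      Real.Gamma_add_one hxν, Real.Gamma_add_one hx.ne', Real.Gamma_add_one hν.ne']
    have := (Real.Gamma_pos_of_pos hx).ne'
    field_simp

lemma sum_range_rfac_sub_one {ν : ℝ} (hν : 0 < ν) (n : ℕ) :
    ∑ j ∈ range n, rfac ((j : ℝ) + 1) (ν - 1) / Real.Gamma ν
      = rfac n ν / Real.Gamma (ν + 1) := by
  have h := sum_range_sub (fun j : ℕ => rfac j ν / Real.Gamma (ν + 1)) n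
  simp only [Nat.cast_add, Nat.cast_one, Nat.cast_zero, rfac_zero_left, zero_div, sub_zero] at h
  rw [← h]
  refine sum_congr rfl fun j _ => ?_
  rw [rfac_add_one_div_Gamma j.cast_nonneg hν]
  ring

lemma sum_Icc_rfac_sub_one {ν : ℝ} (hν : 0 < ν) {a s : ℤ} (hs : a ≤ s) :
    ∑ τ ∈ Icc (a + 1) s, rfac ((s : ℝ) - τ + 1) (ν - 1) / Real.Gamma ν
      = rfac ((s - a : ℤ) : ℝ) ν / Real.Gamma (ν + 1) := by
  obtain ⟨n, rfl⟩ : ∃ n : ℕ, s = a + n := ⟨(s - a).toNat, by omega⟩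
  rw [show ((a + n - a : ℤ) : ℝ) = n by push_cast; ring, ← sum_range_rfac_sub_one hν n]
  symm
  refine sum_nbij' (fun j => a + n - j) (fun τ => (a + n - τ).toNat) ?_ ?_ ?_ ?_ ?_
  any_goals intro j hj; simp only [mem_Icc, mem_range] at hj ⊢; omega
  intro j _
  push_cast
  ring_nf

lemma rfac_sub_add_one_div_Gamma_nonneg {ν : ℝ} (hν : 0 < ν) {s τ : ℤ} (hτ : τ ≤ s) :
    0 ≤ rfac ((s : ℝ) - τ + 1) (ν - 1) / Real.Gamma ν := by
  have : (τ : ℝ) ≤ s := by exact_mod_cast hτ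
  exact div_nonneg (rfac_nonneg (by linarith) (by linarith)) (Real.Gamma_pos_of_pos hν).le

lemma tsum_nat_add_le_of_le {w : ℤ → ℝ} {b c : ℤ} (hbc : b ≤ c) (hw : ∀ s, b ≤ s → 0 ≤ w s)
    (hsum : Summable fun k : ℕ => w (b + k)) :
    (Summable fun k : ℕ => w (c + k)) ∧ ∑' k : ℕ, w (c + k) ≤ ∑' k : ℕ, w (b + k) := by
  obtain ⟨m, rfl⟩ : ∃ m : ℕ, c = b + m := ⟨(c - b).toNat, by omega⟩
  have hshift : (fun k : ℕ => w (b + m + k)) = fun k => w (b + ↑(k + m)) := by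
    funext k; push_cast; ring_nf
  rw [hshift]
  refine ⟨(summable_nat_add_iff m).2 hsum, ?_⟩
  rw [← hsum.sum_add_tsum_nat_add m]
  exact le_add_of_nonneg_left (sum_nonneg fun k _ => hw _ (by omega))

noncomputable def Tterm (ν : ℝ) (a : ℤ) (p : ℤ → ℝ) (F : ℤ → ℝ → ℝ) (y : ℤ → ℝ) (s : ℤ) : ℝ :=
  (1 / p s) * ∑ τ ∈ Icc (a + 1) s, rfac ((s : ℝ) - τ + 1) (ν - 1) / Real.Gamma ν * F τ (y (τ - 1))

section Tmap

variable {ν : ℝ} {a : ℤ} {p : ℤ → ℝ} {F : ℤ → ℝ → ℝ} {M K : ℝ} {x y : ℤ → ℝ}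

lemma Tmap_summand_eq_Tterm (t : ℤ) (k : ℕ) :
    (1 / p (t + 1 + k)) * ∑ τ ∈ Icc (a + 1) (t + 1 + (k : ℤ)),
      rfac ((t : ℝ) + 1 + (k : ℝ) - (τ : ℝ) + 1) (ν - 1) / Real.Gamma ν * F τ (y (τ - 1))
      = Tterm ν a p F y (t + 1 + k) := by
  simp only [Tterm, Int.cast_add, Int.cast_one, Int.cast_natCast]

lemma Tmap_eq_add_tsum_Tterm (t : ℤ) :
    Tmap ν a p F M y t = M + ∑' k : ℕ, Tterm ν a p F y (t + 1 + k) := by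
  simp only [Tmap, Tmap_summand_eq_Tterm]

lemma Tterm_self : Tterm ν a p F y a = 0 := by
  simp [Tterm]

lemma Tterm_nonneg (hν : 0 < ν) (hp : ∀ t, a ≤ t → 0 < p t)
    (hF0 : ∀ t, a + 1 ≤ t → ∀ u : ℝ, 0 ≤ u → 0 ≤ F t u) (hy : ∀ t, a ≤ t → 0 ≤ y t)
    {s : ℤ} (hs : a ≤ s) : 0 ≤ Tterm ν a p F y s := by
  refine mul_nonneg (one_div_nonneg.2 (hp s hs).le) (sum_nonneg fun τ hτ => ?_)
  rw [mem_Icc] at hτ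
  exact mul_nonneg (rfac_sub_add_one_div_Gamma_nonneg hν hτ.2) (hF0 τ hτ.1 _ (hy _ (by omega)))

lemma Tmap_sub_one {t : ℤ} (hsum : Summable fun k : ℕ => Tterm ν a p F y (t - 1 + 1 + k)) :
    Tmap ν a p F M y (t - 1) = Tmap ν a p F M y t + Tterm ν a p F y t := by
  have hshift : ∀ k : ℕ, Tterm ν a p F y (t - 1 + 1 + ((k + 1 : ℕ) : ℤ))
      = Tterm ν a p F y (t + 1 + k) := fun k => by push_cast; ring_nf
  rw [Tmap_eq_add_tsum_Tterm, Tmap_eq_add_tsum_Tterm, hsum.tsum_eq_zero_add, tsum_congr hshift,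
    Nat.cast_zero, add_zero, sub_add_cancel]
  ring

lemma Tmap_mem_zetaM (hν : 0 < ν) (hM : 0 ≤ M) (hp : ∀ t, a ≤ t → 0 < p t)
    (hF0 : ∀ t, a + 1 ≤ t → ∀ u : ℝ, 0 ≤ u → 0 ≤ F t u)
    (hsum : ∀ t, a - 1 ≤ t → Summable fun k : ℕ => Tterm ν a p F y (t + 1 + k))
    (hy : zetaM a M y) : zetaM a M (Tmap ν a p F M y) := by
  have hy0 : ∀ t, a ≤ t → 0 ≤ y t := fun t ht => hM.trans (hy.1 t (by omega))
  have hnbl : ∀ t, a ≤ t → nbl (Tmap ν a p F M y) t = -Tterm ν a p F y t := by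
    intro t ht
    rw [nbl, Tmap_sub_one (hsum (t - 1) (by omega))]
    ring
  refine ⟨fun t ht => ?_, fun t ht => ?_, ?_⟩
  · rw [Tmap_eq_add_tsum_Tterm]
    exact le_add_of_nonneg_right (tsum_nonneg fun k => Tterm_nonneg hν hp hF0 hy0 (by omega))
  · rw [hnbl t ht, neg_nonpos]
    exact Tterm_nonneg hν hp hF0 hy0 ht
  · rw [hnbl a le_rfl, Tterm_self, neg_zero]

lemma abs_Tterm_sub_le (hν : 0 < ν) (hK : 0 ≤ K) (hp : ∀ t, a ≤ t → 0 < p t)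
    (hFlip : ∀ t, a + 1 ≤ t → ∀ u v : ℝ, 0 ≤ u → 0 ≤ v → |F t u - F t v| ≤ K * |u - v|)
    (hx : ∀ t, a ≤ t → 0 ≤ x t) (hy : ∀ t, a ≤ t → 0 ≤ y t)
    {C : ℝ} (hC : ∀ t, a ≤ t → |x t - y t| ≤ C) {s : ℤ} (hs : a ≤ s) :
    |Tterm ν a p F x s - Tterm ν a p F y s|
      ≤ K * C / Real.Gamma (ν + 1) * (rfac ((s - a : ℤ) : ℝ) ν / p s) := by
  have hps := hp s hs
  calc |Tterm ν a p F x s - Tterm ν a p F y s|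
      = 1 / p s * |∑ τ ∈ Icc (a + 1) s, rfac ((s : ℝ) - τ + 1) (ν - 1) / Real.Gamma ν
          * (F τ (x (τ - 1)) - F τ (y (τ - 1)))| := by
        rw [Tterm, Tterm, ← mul_sub, ← sum_sub_distrib, abs_mul, abs_of_pos (one_div_pos.2 hps)]
        simp only [mul_sub]
    _ ≤ 1 / p s * ∑ τ ∈ Icc (a + 1) s,
          rfac ((s : ℝ) - τ + 1) (ν - 1) / Real.Gamma ν * (K * C) := by
        gcongr
        refine (abs_sum_le_sum_abs _ _).trans (sum_le_sum fun τ hτ => ?_)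
        rw [mem_Icc] at hτ
        have hker := rfac_sub_add_one_div_Gamma_nonneg hν hτ.2
        rw [abs_mul, abs_of_nonneg hker]
        gcongr
        calc |F τ (x (τ - 1)) - F τ (y (τ - 1))|
            ≤ K * |x (τ - 1) - y (τ - 1)| := hFlip τ hτ.1 _ _ (hx _ (by omega)) (hy _ (by omega))
          _ ≤ K * C := by gcongr; exact hC _ (by omega)
    _ = K * C / Real.Gamma (ν + 1) * (rfac ((s - a : ℤ) : ℝ) ν / p s) := by
        rw [← sum_mul, sum_Icc_rfac_sub_one hν hs]
        ring

lemma abs_Tmap_sub_le (hν : 0 < ν) (hK : 0 ≤ K) (hp : ∀ t, a ≤ t → 0 < p t)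
    (hFlip : ∀ t, a + 1 ≤ t → ∀ u v : ℝ, 0 ≤ u → 0 ≤ v → |F t u - F t v| ≤ K * |u - v|)
    (hx : ∀ t, a ≤ t → 0 ≤ x t) (hy : ∀ t, a ≤ t → 0 ≤ y t)
    {C : ℝ} (hC : ∀ t, a ≤ t → |x t - y t| ≤ C) {t : ℤ} (ht : a - 1 ≤ t)
    (hsx : Summable fun k : ℕ => Tterm ν a p F x (t + 1 + k))
    (hsy : Summable fun k : ℕ => Tterm ν a p F y (t + 1 + k))
    (hws : Summable fun k : ℕ => rfac ((k : ℝ) + 1) ν / p (a + 1 + k)) :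
    |Tmap ν a p F M x t - Tmap ν a p F M y t|
      ≤ K / Real.Gamma (ν + 1) * (∑' k : ℕ, rfac ((k : ℝ) + 1) ν / p (a + 1 + k)) * C := by
  set w : ℤ → ℝ := fun s => rfac ((s - a : ℤ) : ℝ) ν / p s with hw_def
  have hw : ∀ s, a ≤ s → 0 ≤ w s := fun s hs => by
    have : (a : ℝ) ≤ s := by exact_mod_cast hs
    exact div_nonneg (rfac_nonneg (by push_cast; linarith) (by push_cast; linarith)) (hp s hs).le
  have hw_succ : ∀ k : ℕ, w (a + ↑(k + 1)) = rfac ((k : ℝ) + 1) ν / p (a + 1 + k) := fun k => by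
    simp only [hw_def]; push_cast; ring_nf
  have hwa : Summable fun k : ℕ => w (a + k) :=
    (summable_nat_add_iff 1).1 (hws.congr fun k => (hw_succ k).symm)
  have hwa_eq : ∑' k : ℕ, w (a + k) = ∑' k : ℕ, rfac ((k : ℝ) + 1) ν / p (a + 1 + k) := by
    rw [hwa.tsum_eq_zero_add, tsum_congr hw_succ]
    simp [hw_def, rfac_zero_left]
  obtain ⟨hwt, hwt_le⟩ := tsum_nat_add_le_of_le (show a ≤ t + 1 by omega) hw hwa
  have hC0 : 0 ≤ C := (abs_nonneg _).trans (hC a le_rfl)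
  calc |Tmap ν a p F M x t - Tmap ν a p F M y t|
      = ‖∑' k : ℕ, (Tterm ν a p F x (t + 1 + k) - Tterm ν a p F y (t + 1 + k))‖ := by
        rw [Tmap_eq_add_tsum_Tterm, Tmap_eq_add_tsum_Tterm, add_sub_add_left_eq_sub,
          hsx.tsum_sub hsy, Real.norm_eq_abs]
    _ ≤ K * C / Real.Gamma (ν + 1) * ∑' k : ℕ, w (t + 1 + k) :=
        tsum_of_norm_bounded (hwt.hasSum.mul_left _) fun k =>
          abs_Tterm_sub_le hν hK hp hFlip hx hy hC (by omega)
    _ ≤ K * C / Real.Gamma (ν + 1) * ∑' k : ℕ, w (a + k) := by gcongr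
    _ = K / Real.Gamma (ν + 1) * (∑' k : ℕ, rfac ((k : ℝ) + 1) ν / p (a + 1 + k)) * C := by
        rw [hwa_eq]
        ring

end Tmap

theorem stmt13_general (ν : ℝ) (h1 : 0 < ν) (a : ℤ) (p : ℤ → ℝ) (F : ℤ → ℝ → ℝ)
    (K M : ℝ) (hK : 0 < K) (hM : 0 ≤ M)
    (hp : ∀ t, a ≤ t → 0 < p t)
    (hF0 : ∀ t, a + 1 ≤ t → ∀ u : ℝ, 0 ≤ u → 0 ≤ F t u)
    (hFlip : ∀ t, a + 1 ≤ t → ∀ u v : ℝ, 0 ≤ u → 0 ≤ v → |F t u - F t v| ≤ K * |u - v|)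
    (hconv : ∀ y : ℤ → ℝ, zetaM a M y → ∀ t : ℤ, a - 1 ≤ t → Summable (fun k : ℕ =>
      (1 / p (t + 1 + k)) * ∑ τ ∈ Finset.Icc (a + 1) (t + 1 + (k : ℤ)),
        rfac ((t : ℝ) + 1 + (k : ℝ) - (τ : ℝ) + 1) (ν - 1) / Real.Gamma ν * F τ (y (τ - 1))))
    (hws : Summable (fun k : ℕ => rfac ((k : ℝ) + 1) ν / p (a + 1 + k))) :
    (∀ y : ℤ → ℝ, zetaM a M y → zetaM a M (Tmap ν a p F M y)) ∧
    (∀ x y : ℤ → ℝ, zetaM a M x → zetaM a M y →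
      ∀ C : ℝ, (∀ t, a - 1 ≤ t → |x t - y t| ≤ C) →
      ∀ t, a - 1 ≤ t →
        |Tmap ν a p F M x t - Tmap ν a p F M y t| ≤
          K / Real.Gamma (ν + 1) * (∑' k : ℕ, rfac ((k : ℝ) + 1) ν / p (a + 1 + k)) * C) := by
  have hsum : ∀ y, zetaM a M y → ∀ t, a - 1 ≤ t →
      Summable fun k : ℕ => Tterm ν a p F y (t + 1 + k) := fun y hy t ht => by
    simpa only [Tmap_summand_eq_Tterm] using hconv y hy t ht
  have hnonneg : ∀ y, zetaM a M y → ∀ t, a ≤ t → 0 ≤ y t :=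
    fun y hy t ht => hM.trans (hy.1 t (by omega))
  refine ⟨fun y hy => Tmap_mem_zetaM h1 hM hp hF0 (hsum y hy) hy, ?_⟩
  intro x y hx hy C hC t ht
  exact abs_Tmap_sub_le h1 hK.le hp hFlip (hnonneg x hx) (hnonneg y hy)
    (fun s hs => hC s (by omega)) ht (hsum x hx t ht) (hsum y hy t ht) hws

theorem stmt13 (ν : ℝ) (h1 : 0 < ν) (h2 : ν < 1) (a : ℤ) (p : ℤ → ℝ) (F : ℤ → ℝ → ℝ)
    (K M : ℝ) (hK : 0 < K) (hM : 0 ≤ M)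
    (hp : ∀ t, a ≤ t → 0 < p t)
    (hF0 : ∀ t, a + 1 ≤ t → ∀ u : ℝ, 0 ≤ u → 0 ≤ F t u)
    (hFlip : ∀ t, a + 1 ≤ t → ∀ u v : ℝ, 0 ≤ u → 0 ≤ v → |F t u - F t v| ≤ K * |u - v|)
    (hconv : ∀ y : ℤ → ℝ, zetaM a M y → ∀ t : ℤ, a - 1 ≤ t → Summable (fun k : ℕ =>
      (1 / p (t + 1 + k)) * ∑ τ ∈ Finset.Icc (a + 1) (t + 1 + (k : ℤ)),
        rfac ((t : ℝ) + 1 + (k : ℝ) - (τ : ℝ) + 1) (ν - 1) / Real.Gamma ν * F τ (y (τ - 1))))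
    (hws : Summable (fun k : ℕ => rfac ((k : ℝ) + 1) ν / p (a + 1 + k))) :
    (∀ y : ℤ → ℝ, zetaM a M y → zetaM a M (Tmap ν a p F M y)) ∧
    (∀ x y : ℤ → ℝ, zetaM a M x → zetaM a M y →
      ∀ C : ℝ, (∀ t, a - 1 ≤ t → |x t - y t| ≤ C) →
      ∀ t, a - 1 ≤ t →
        |Tmap ν a p F M x t - Tmap ν a p F M y t| ≤
          K / Real.Gamma (ν + 1) * (∑' k : ℕ, rfac ((k : ℝ) + 1) ν / p (a + 1 + k)) * C) :=
  stmt13_general ν h1 a p F K M hK hM hp hF0 hFlip hconv hws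
end
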